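/- In the Case II setting, for every tracial state τ on Pol(O_F^+) one has Σ_{μ,ν=1}^{r} (1 − q_μ²·q_ν²)·τ(Tr(C_{μν}^*·C_{μν})) = 0. Consequently τ(Tr(C_{μν}^*·C_{μν})) = 0 whenever q_μ·q_ν < 1, i.e., whenever (μ,ν) ≠ (r,r); in particular all entries of the blocks C_{μν} with (μ,ν) ≠ (r,r) belong to the Kac ideal J_KAC(Pol(O_F^+)). -/
import Mathlib


open scoped ComplexOrder

/-- The defining relations of `Pol(O_F⁺)`: `U` is unitary and `U·F = F·conj(U)`
(equivalently `U = F·conj(U)·F⁻¹`). -/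
def OrthRel {ι : Type} [Fintype ι] [DecidableEq ι] {A : Type} [Ring A] [Algebra ℂ A]
    [StarRing A] (F : Matrix ι ι ℂ) (u : Matrix ι ι A) : Prop :=
  u * u.conjTranspose = 1 ∧ u.conjTranspose * u = 1 ∧
    u * F.map (algebraMap ℂ A) = F.map (algebraMap ℂ A) * u.map star

/-- A presentation of the universal unital complex *-algebra `Pol(O_F⁺)`:
a unital complex *-algebra carrying a matrix of generators `u` satisfying the
defining relations, universal among all such. -/
structure PolO {ι : Type} [Fintype ι] [DecidableEq ι] (F : Matrix ι ι ℂ) where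
  carrier : Type
  [isRing : Ring carrier]
  [isAlgebra : Algebra ℂ carrier]
  [isStarRing : StarRing carrier]
  [isStarModule : StarModule ℂ carrier]
  u : Matrix ι ι carrier
  rel : OrthRel F u
  universal : ∀ (B : Type) [Ring B] [Algebra ℂ B] [StarRing B] [StarModule ℂ B]
      (v : Matrix ι ι B), OrthRel F v →
      ∃! φ : carrier →⋆ₐ[ℂ] B, ∀ j k, φ (u j k) = v j k

attribute [instance] PolO.isRing PolO.isAlgebra PolO.isStarRing PolO.isStarModule

/-- The defining relations of `Pol(U_N⁺)`: both `U` and `conj(U)` are unitary. -/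
def BiUnitary {ι : Type} [Fintype ι] [DecidableEq ι] {A : Type} [Ring A] [Algebra ℂ A]
    [StarRing A] (u : Matrix ι ι A) : Prop :=
  u * u.conjTranspose = 1 ∧ u.conjTranspose * u = 1 ∧
    u.map star * (u.map star).conjTranspose = 1 ∧ (u.map star).conjTranspose * u.map star = 1

/-- A presentation of the universal unital complex *-algebra `Pol(U_N⁺)` (`N = #ι`). -/
structure PolU (ι : Type) [Fintype ι] [DecidableEq ι] where
  carrier : Type
  [isRing : Ring carrier]
  [isAlgebra : Algebra ℂ carrier]
  [isStarRing : StarRing carrier]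
  [isStarModule : StarModule ℂ carrier]
  u : Matrix ι ι carrier
  rel : BiUnitary u
  universal : ∀ (B : Type) [Ring B] [Algebra ℂ B] [StarRing B] [StarModule ℂ B]
      (v : Matrix ι ι B), BiUnitary v →
      ∃! φ : carrier →⋆ₐ[ℂ] B, ∀ j k, φ (u j k) = v j k

attribute [instance] PolU.isRing PolU.isAlgebra PolU.isStarRing PolU.isStarModule

/-- A unital complex *-algebra is RFD if finite-dimensional *-representations
separate its points. -/
def IsRFD (A : Type) [Ring A] [Algebra ℂ A] [StarRing A] : Prop :=
  ∀ a : A, a ≠ 0 → ∃ (n : ℕ) (π : A →⋆ₐ[ℂ] Matrix (Fin n) (Fin n) ℂ), π a ≠ 0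

/-- A tracial state on a unital complex *-algebra. -/
structure TracialState (A : Type) [Ring A] [Algebra ℂ A] [StarRing A] where
  toFun : A →ₗ[ℂ] ℂ
  map_one' : toFun 1 = 1
  nonneg' : ∀ a : A, 0 ≤ toFun (star a * a)
  tracial' : ∀ a b : A, toFun (a * b) = toFun (b * a)

/-- The Kac ideal: elements killed by `τ(a^* a)` for every tracial state `τ`. -/
def kacIdeal (A : Type) [Ring A] [Algebra ℂ A] [StarRing A] : Set A :=
  {a : A | ∀ τ : TracialState A, τ.toFun (star a * a) = 0}

/-- The RFD ideal: the intersection of the kernels of all finite-dimensional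
*-representations. -/
def rfdIdeal (A : Type) [Ring A] [Algebra ℂ A] [StarRing A] : Set A :=
  {a : A | ∀ (n : ℕ) (π : A →⋆ₐ[ℂ] Matrix (Fin n) (Fin n) ℂ), π a = 0}

/-- A subset of a *-ring which is a two-sided ideal closed under the star operation. -/
def IsStarIdeal {A : Type} [Ring A] [StarRing A] (T : Set A) : Prop :=
  (0 : A) ∈ T ∧ (∀ a b, a ∈ T → b ∈ T → a + b ∈ T) ∧
    (∀ x a, a ∈ T → x * a ∈ T ∧ a * x ∈ T) ∧ (∀ a, a ∈ T → star a ∈ T)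

/-- The two-sided *-ideal generated by a set. -/
def starIdealSpan {A : Type} [Ring A] [StarRing A] (S : Set A) : Set A :=
  ⋂₀ {T : Set A | IsStarIdeal T ∧ S ⊆ T}

/-- The index set in the Case II setting: for each `ν = 1,…,r` a block `P_ν ⊕ Q_ν`
of size `2M_ν`. -/
abbrev CaseIIIdx (r : ℕ) (M : Fin r → ℕ) : Type := Σ ν : Fin r, (Fin (M ν) ⊕ Fin (M ν))

/-- The Case II matrix `F`: block-diagonal with blocks
`[[0, q_ν·I_{M_ν}], [−q_ν⁻¹·I_{M_ν}, 0]]` for `ν = 1,…,r`. -/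
noncomputable def FCaseII (r : ℕ) (q : Fin r → ℝ) (M : Fin r → ℕ) :
    Matrix (CaseIIIdx r M) (CaseIIIdx r M) ℂ := fun a b =>
  match a, b with
  | ⟨ν, .inl j⟩, ⟨μ, .inr k⟩ =>
      if ν = μ ∧ (j : ℕ) = (k : ℕ) then ((q ν : ℝ) : ℂ) else 0
  | ⟨ν, .inr j⟩, ⟨μ, .inl k⟩ =>
      if ν = μ ∧ (j : ℕ) = (k : ℕ) then ((-(q ν)⁻¹ : ℝ) : ℂ) else 0
  | _, _ => 0


section AuxCaseII

variable {r : ℕ} {q : Fin r → ℝ} {M : Fin r → ℕ}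

/-- Splitting a sum over the Case II index set into blocks. -/
lemma sumCaseII {E : Type*} [AddCommMonoid E] (f : CaseIIIdx r M → E) :
    ∑ x : CaseIIIdx r M, f x
      = ∑ ν, ((∑ j, f ⟨ν, .inl j⟩) + ∑ j, f ⟨ν, .inr j⟩) := by
  rw [← Finset.univ_sigma_univ, Finset.sum_sigma]
  exact Finset.sum_congr rfl fun ν _ => Fintype.sum_sum_type _

lemma sumSig {E : Type*} [AddCommMonoid E] (g : (μ : Fin r) → Fin (M μ) → E) :
    ∑ p : (Σ μ : Fin r, Fin (M μ)), g p.1 p.2 = ∑ μ, ∑ j, g μ j := by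
  rw [← Finset.univ_sigma_univ, Finset.sum_sigma]

lemma sum4_comm {E : Type*} [AddCommMonoid E]
    (f : (μ : Fin r) → Fin (M μ) → (ν : Fin r) → Fin (M ν) → E) :
    ∑ μ, ∑ j, ∑ ν, ∑ k, f μ j ν k = ∑ ν, ∑ k, ∑ μ, ∑ j, f μ j ν k := by
  have h1 : ∑ μ, ∑ j, ∑ ν, ∑ k, f μ j ν k
      = ∑ p : (Σ μ : Fin r, Fin (M μ)), ∑ p' : (Σ ν : Fin r, Fin (M ν)),
          f p.1 p.2 p'.1 p'.2 := by
    rw [sumSig (g := fun μ j => ∑ p' : (Σ ν : Fin r, Fin (M ν)), f μ j p'.1 p'.2)]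
    exact Finset.sum_congr rfl fun μ _ => Finset.sum_congr rfl fun j _ => (sumSig _).symm
  have h2 : ∑ ν, ∑ k, ∑ μ, ∑ j, f μ j ν k
      = ∑ p' : (Σ ν : Fin r, Fin (M ν)), ∑ p : (Σ μ : Fin r, Fin (M μ)),
          f p.1 p.2 p'.1 p'.2 := by
    rw [sumSig (g := fun ν k => ∑ p : (Σ μ : Fin r, Fin (M μ)), f p.1 p.2 ν k)]
    exact Finset.sum_congr rfl fun ν _ => Finset.sum_congr rfl fun k _ => (sumSig _).symm
  rw [h1, h2, Finset.sum_comm]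

lemma swap3 {E : Type*} [AddCommMonoid E] {m : ℕ}
    (f : (ν : Fin r) → Fin (M ν) → Fin m → E) :
    ∑ ν, ∑ k, ∑ j, f ν k j = ∑ j, ∑ ν, ∑ k, f ν k j := by
  rw [show (∑ ν, ∑ k, ∑ j, f ν k j) = ∑ ν, ∑ j, ∑ k, f ν k j from
    Finset.sum_congr rfl fun ν _ => Finset.sum_comm, Finset.sum_comm]

/-- The entrywise consequence of the relation `U·F = F·conj(U)` linking the `B`-block
entries to the (starred) `C`-block entries. -/
lemma entryB {A : Type} [Ring A] [Algebra ℂ A] [StarRing A]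
    {u : Matrix (CaseIIIdx r M) (CaseIIIdx r M) A}
    (hq0 : ∀ ν, 0 < q ν) (hrel : OrthRel (FCaseII r q M) u)
    (μ ν : Fin r) (j : Fin (M μ)) (k : Fin (M ν)) :
    u ⟨μ, .inl j⟩ ⟨ν, .inr k⟩
      = ((-(q μ * q ν) : ℝ) : ℂ) • star (u ⟨μ, .inr j⟩ ⟨ν, .inl k⟩) := by
  have h : (u * (FCaseII r q M).map (algebraMap ℂ A)) ⟨μ, .inl j⟩ ⟨ν, .inl k⟩
      = ((FCaseII r q M).map (algebraMap ℂ A) * u.map star) ⟨μ, .inl j⟩ ⟨ν, .inl k⟩ := by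
    rw [hrel.2.2]
  rw [Matrix.mul_apply, Matrix.mul_apply] at h
  have hL : ∑ c, u ⟨μ, .inl j⟩ c * ((FCaseII r q M).map (algebraMap ℂ A)) c ⟨ν, .inl k⟩
      = ((-(q ν)⁻¹ : ℝ) : ℂ) • u ⟨μ, .inl j⟩ ⟨ν, .inr k⟩ := by
    rw [Finset.sum_eq_single (⟨ν, Sum.inr k⟩ : CaseIIIdx r M)]
    · rw [Matrix.map_apply]
      rw [show FCaseII r q M ⟨ν, .inr k⟩ ⟨ν, .inl k⟩ = ((-(q ν)⁻¹ : ℝ) : ℂ) from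
        if_pos ⟨rfl, rfl⟩]
      rw [← Algebra.commutes, ← Algebra.smul_def]
    · rintro ⟨ν', (j' | j')⟩ - hc
      · rw [Matrix.map_apply]
        rw [show FCaseII r q M ⟨ν', .inl j'⟩ ⟨ν, .inl k⟩ = 0 from rfl]
        simp
      · rw [Matrix.map_apply]
        have h0 : FCaseII r q M ⟨ν', .inr j'⟩ ⟨ν, .inl k⟩ = 0 := by
          rw [show FCaseII r q M ⟨ν', .inr j'⟩ ⟨ν, .inl k⟩
              = if ν' = ν ∧ (j' : ℕ) = (k : ℕ) then ((-(q ν')⁻¹ : ℝ) : ℂ) else 0 from rfl]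
          rw [if_neg]
          rintro ⟨rfl, h2⟩
          exact hc (by rw [Fin.ext h2])
        rw [h0]; simp
    · intro h; exact absurd (Finset.mem_univ _) h
  have hR : ∑ c, ((FCaseII r q M).map (algebraMap ℂ A)) ⟨μ, .inl j⟩ c * (u.map star) c ⟨ν, .inl k⟩
      = ((q μ : ℝ) : ℂ) • star (u ⟨μ, .inr j⟩ ⟨ν, .inl k⟩) := by
    rw [Finset.sum_eq_single (⟨μ, Sum.inr j⟩ : CaseIIIdx r M)]
    · rw [Matrix.map_apply, Matrix.map_apply]
      rw [show FCaseII r q M ⟨μ, .inl j⟩ ⟨μ, .inr j⟩ = ((q μ : ℝ) : ℂ) from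
        if_pos ⟨rfl, rfl⟩]
      rw [← Algebra.smul_def]
    · rintro ⟨ν', (j' | j')⟩ - hc
      · rw [Matrix.map_apply]
        rw [show FCaseII r q M ⟨μ, .inl j⟩ ⟨ν', .inl j'⟩ = 0 from rfl]
        simp
      · rw [Matrix.map_apply]
        have h0 : FCaseII r q M ⟨μ, .inl j⟩ ⟨ν', .inr j'⟩ = 0 := by
          rw [show FCaseII r q M ⟨μ, .inl j⟩ ⟨ν', .inr j'⟩
              = if μ = ν' ∧ (j : ℕ) = (j' : ℕ) then ((q μ : ℝ) : ℂ) else 0 from rfl]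
          rw [if_neg]
          rintro ⟨rfl, h2⟩
          exact hc (by rw [Fin.ext h2.symm])
        rw [h0]; simp
    · intro h; exact absurd (Finset.mem_univ _) h
  rw [hL, hR] at h
  have hne : (q ν) ≠ 0 := (hq0 ν).ne'
  have h2 := congrArg (fun x => ((-(q ν) : ℝ) : ℂ) • x) h
  simp only [smul_smul, ← Complex.ofReal_mul] at h2
  rw [show -q ν * -(q ν)⁻¹ = 1 by field_simp] at h2
  rw [show -q ν * q μ = -(q μ * q ν) by ring] at h2
  simpa using h2

end AuxCaseII

/-- in the Case II setting, every tracial state `τ` on `Pol(O_F⁺)` satisfies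
`Σ_{μ,ν} (1 − q_μ²q_ν²)·τ(Tr(C_{μν}^* C_{μν})) = 0`; consequently
`τ(Tr(C_{μν}^* C_{μν})) = 0` whenever `(μ,ν) ≠ (r,r)`, and all entries of the blocks
`C_{μν}` with `(μ,ν) ≠ (r,r)` lie in the Kac ideal. -/
theorem caseII_C_blocks_in_kac (r : ℕ) (hr : 1 ≤ r) (q : Fin r → ℝ) (hq0 : ∀ ν, 0 < q ν)
    (hmono : StrictMono q) (hqlast : q ⟨r - 1, by omega⟩ = 1) (M : Fin r → ℕ)
    (hM : ∀ ν : Fin r, (ν : ℕ) < r - 1 → 1 ≤ M ν) (P : PolO (FCaseII r q M)) :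
    (∀ τ : TracialState P.carrier,
      (∑ μ : Fin r, ∑ ν : Fin r, ((1 - q μ ^ 2 * q ν ^ 2 : ℝ) : ℂ) *
          τ.toFun (∑ k : Fin (M ν), ∑ j : Fin (M μ),
            star (P.u ⟨μ, .inr j⟩ ⟨ν, .inl k⟩) * P.u ⟨μ, .inr j⟩ ⟨ν, .inl k⟩) = 0) ∧
      ∀ μ ν : Fin r, (μ, ν) ≠ ((⟨r - 1, by omega⟩ : Fin r), (⟨r - 1, by omega⟩ : Fin r)) →
        τ.toFun (∑ k : Fin (M ν), ∑ j : Fin (M μ),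
          star (P.u ⟨μ, .inr j⟩ ⟨ν, .inl k⟩) * P.u ⟨μ, .inr j⟩ ⟨ν, .inl k⟩) = 0) ∧
      ∀ μ ν : Fin r, (μ, ν) ≠ ((⟨r - 1, by omega⟩ : Fin r), (⟨r - 1, by omega⟩ : Fin r)) →
        ∀ (j : Fin (M μ)) (k : Fin (M ν)),
          P.u ⟨μ, .inr j⟩ ⟨ν, .inl k⟩ ∈ kacIdeal P.carrier := by
    classical
  have hlast : ∀ ν : Fin r, q ν ≤ 1 := by
    intro ν
    rw [← hqlast]
    exact hmono.monotone (Fin.le_def.mpr (by have := ν.isLt; simp; omega))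
  -- the main trace identity for an arbitrary tracial state
  have main : ∀ τ : TracialState P.carrier,
      ∑ μ : Fin r, ∑ ν : Fin r, ((1 - q μ ^ 2 * q ν ^ 2 : ℝ) : ℂ) *
          τ.toFun (∑ k : Fin (M ν), ∑ j : Fin (M μ),
            star (P.u ⟨μ, .inr j⟩ ⟨ν, .inl k⟩) * P.u ⟨μ, .inr j⟩ ⟨ν, .inl k⟩) = 0 := by
    intro τ
    set T := τ.toFun with hT
    obtain ⟨hUU, hsU, hUF⟩ := P.rel
    have hB := entryB (q := q) (M := M) hq0 P.rel
    -- column identity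
    have col : ∀ (ν : Fin r) (k : Fin (M ν)),
        (∑ μ, ∑ j, T (star (P.u ⟨μ, .inl j⟩ ⟨ν, .inl k⟩) * P.u ⟨μ, .inl j⟩ ⟨ν, .inl k⟩))
        + (∑ μ, ∑ j, T (star (P.u ⟨μ, .inr j⟩ ⟨ν, .inl k⟩) * P.u ⟨μ, .inr j⟩ ⟨ν, .inl k⟩))
        = 1 := by
      intro ν k
      calc (∑ μ, ∑ j, T (star (P.u ⟨μ, .inl j⟩ ⟨ν, .inl k⟩) * P.u ⟨μ, .inl j⟩ ⟨ν, .inl k⟩))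
            + (∑ μ, ∑ j, T (star (P.u ⟨μ, .inr j⟩ ⟨ν, .inl k⟩) * P.u ⟨μ, .inr j⟩ ⟨ν, .inl k⟩))
          = ∑ a : CaseIIIdx r M,
              T (star (P.u a ⟨ν, .inl k⟩) * P.u a ⟨ν, .inl k⟩) := by
            rw [sumCaseII (f := fun a =>
              T (star (P.u a ⟨ν, .inl k⟩) * P.u a ⟨ν, .inl k⟩)), Finset.sum_add_distrib]
        _ = T ((P.u.conjTranspose * P.u) ⟨ν, .inl k⟩ ⟨ν, .inl k⟩) := by
            rw [Matrix.mul_apply, map_sum]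
            exact Finset.sum_congr rfl fun a _ => by rw [Matrix.conjTranspose_apply]
        _ = 1 := by rw [hsU, Matrix.one_apply_eq]; exact τ.map_one'
    -- row identity
    have row : ∀ (μ : Fin r) (j : Fin (M μ)),
        (∑ ν, ∑ k, T (P.u ⟨μ, .inl j⟩ ⟨ν, .inl k⟩ * star (P.u ⟨μ, .inl j⟩ ⟨ν, .inl k⟩)))
        + (∑ ν, ∑ k, T (P.u ⟨μ, .inl j⟩ ⟨ν, .inr k⟩ * star (P.u ⟨μ, .inl j⟩ ⟨ν, .inr k⟩)))
        = 1 := by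
      intro μ j
      calc (∑ ν, ∑ k, T (P.u ⟨μ, .inl j⟩ ⟨ν, .inl k⟩ * star (P.u ⟨μ, .inl j⟩ ⟨ν, .inl k⟩)))
            + (∑ ν, ∑ k, T (P.u ⟨μ, .inl j⟩ ⟨ν, .inr k⟩ * star (P.u ⟨μ, .inl j⟩ ⟨ν, .inr k⟩)))
          = ∑ b : CaseIIIdx r M,
              T (P.u ⟨μ, .inl j⟩ b * star (P.u ⟨μ, .inl j⟩ b)) := by
            rw [sumCaseII (f := fun b =>
              T (P.u ⟨μ, .inl j⟩ b * star (P.u ⟨μ, .inl j⟩ b))), Finset.sum_add_distrib]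
        _ = T ((P.u * P.u.conjTranspose) ⟨μ, .inl j⟩ ⟨μ, .inl j⟩) := by
            rw [Matrix.mul_apply, map_sum]
            exact Finset.sum_congr rfl fun b _ => by rw [Matrix.conjTranspose_apply]
        _ = 1 := by rw [hUU, Matrix.one_apply_eq]; exact τ.map_one'
    -- rewrite the second row term using the B/C relation
    have rowterm : ∀ (μ ν : Fin r) (j : Fin (M μ)) (k : Fin (M ν)),
        T (P.u ⟨μ, .inl j⟩ ⟨ν, .inr k⟩ * star (P.u ⟨μ, .inl j⟩ ⟨ν, .inr k⟩))
        = ((q μ ^ 2 * q ν ^ 2 : ℝ) : ℂ)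
            * T (star (P.u ⟨μ, .inr j⟩ ⟨ν, .inl k⟩) * P.u ⟨μ, .inr j⟩ ⟨ν, .inl k⟩) := by
      intro μ ν j k
      rw [hB μ ν j k, star_smul, star_star,
        show star (((-(q μ * q ν) : ℝ) : ℂ)) = ((-(q μ * q ν) : ℝ) : ℂ) from
          Complex.conj_ofReal _,
        smul_mul_smul_comm, map_smul, smul_eq_mul]
      congr 1
      push_cast; ring
    -- sum the column identities over all columns in the P-parts
    have hcol : (∑ μ, ∑ j, ∑ ν, ∑ k,
          T (star (P.u ⟨μ, .inl j⟩ ⟨ν, .inl k⟩) * P.u ⟨μ, .inl j⟩ ⟨ν, .inl k⟩))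
        + (∑ μ, ∑ j, ∑ ν, ∑ k,
          T (star (P.u ⟨μ, .inr j⟩ ⟨ν, .inl k⟩) * P.u ⟨μ, .inr j⟩ ⟨ν, .inl k⟩))
        = ∑ ν : Fin r, ∑ _k : Fin (M ν), (1 : ℂ) := by
      rw [sum4_comm (f := fun μ j ν k =>
          T (star (P.u ⟨μ, .inl j⟩ ⟨ν, .inl k⟩) * P.u ⟨μ, .inl j⟩ ⟨ν, .inl k⟩)),
        sum4_comm (f := fun μ j ν k =>
          T (star (P.u ⟨μ, .inr j⟩ ⟨ν, .inl k⟩) * P.u ⟨μ, .inr j⟩ ⟨ν, .inl k⟩)),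
        ← Finset.sum_add_distrib]
      refine Finset.sum_congr rfl fun ν _ => ?_
      rw [← Finset.sum_add_distrib]
      exact Finset.sum_congr rfl fun k _ => col ν k
    -- sum the row identities over all rows in the P-parts
    have hrow : (∑ μ, ∑ j, ∑ ν, ∑ k,
          T (star (P.u ⟨μ, .inl j⟩ ⟨ν, .inl k⟩) * P.u ⟨μ, .inl j⟩ ⟨ν, .inl k⟩))
        + (∑ μ, ∑ j, ∑ ν, ∑ k, ((q μ ^ 2 * q ν ^ 2 : ℝ) : ℂ)
            * T (star (P.u ⟨μ, .inr j⟩ ⟨ν, .inl k⟩) * P.u ⟨μ, .inr j⟩ ⟨ν, .inl k⟩))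
        = ∑ μ : Fin r, ∑ _j : Fin (M μ), (1 : ℂ) := by
      rw [← Finset.sum_add_distrib]
      refine Finset.sum_congr rfl fun μ _ => ?_
      rw [← Finset.sum_add_distrib]
      refine Finset.sum_congr rfl fun j _ => ?_
      calc (∑ ν, ∑ k, T (star (P.u ⟨μ, .inl j⟩ ⟨ν, .inl k⟩) * P.u ⟨μ, .inl j⟩ ⟨ν, .inl k⟩))
            + ∑ ν, ∑ k, ((q μ ^ 2 * q ν ^ 2 : ℝ) : ℂ)
              * T (star (P.u ⟨μ, .inr j⟩ ⟨ν, .inl k⟩) * P.u ⟨μ, .inr j⟩ ⟨ν, .inl k⟩)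
          = (∑ ν, ∑ k, T (P.u ⟨μ, .inl j⟩ ⟨ν, .inl k⟩ * star (P.u ⟨μ, .inl j⟩ ⟨ν, .inl k⟩)))
            + ∑ ν, ∑ k, T (P.u ⟨μ, .inl j⟩ ⟨ν, .inr k⟩ * star (P.u ⟨μ, .inl j⟩ ⟨ν, .inr k⟩)) := by
            congr 1
            · exact Finset.sum_congr rfl fun ν _ => Finset.sum_congr rfl fun k _ =>
                (τ.tracial' _ _).symm
            · exact Finset.sum_congr rfl fun ν _ => Finset.sum_congr rfl fun k _ =>
                (rowterm μ ν j k).symm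
        _ = 1 := row μ j
    -- the two totals agree, hence the two C-sums agree
    have hCC : (∑ μ, ∑ j, ∑ ν, ∑ k,
          T (star (P.u ⟨μ, .inr j⟩ ⟨ν, .inl k⟩) * P.u ⟨μ, .inr j⟩ ⟨ν, .inl k⟩))
        = ∑ μ, ∑ j, ∑ ν, ∑ k, ((q μ ^ 2 * q ν ^ 2 : ℝ) : ℂ)
            * T (star (P.u ⟨μ, .inr j⟩ ⟨ν, .inl k⟩) * P.u ⟨μ, .inr j⟩ ⟨ν, .inl k⟩) :=
      add_left_cancel (hcol.trans hrow.symm)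
    -- massage the goal into the difference of the two C-sums
    have goalform : ∑ μ : Fin r, ∑ ν : Fin r, ((1 - q μ ^ 2 * q ν ^ 2 : ℝ) : ℂ) *
          T (∑ k : Fin (M ν), ∑ j : Fin (M μ),
            star (P.u ⟨μ, .inr j⟩ ⟨ν, .inl k⟩) * P.u ⟨μ, .inr j⟩ ⟨ν, .inl k⟩)
        = (∑ μ, ∑ j, ∑ ν, ∑ k,
            T (star (P.u ⟨μ, .inr j⟩ ⟨ν, .inl k⟩) * P.u ⟨μ, .inr j⟩ ⟨ν, .inl k⟩))
          - ∑ μ, ∑ j, ∑ ν, ∑ k, ((q μ ^ 2 * q ν ^ 2 : ℝ) : ℂ)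
            * T (star (P.u ⟨μ, .inr j⟩ ⟨ν, .inl k⟩) * P.u ⟨μ, .inr j⟩ ⟨ν, .inl k⟩) := by
      rw [← Finset.sum_sub_distrib]
      refine Finset.sum_congr rfl fun μ _ => ?_
      rw [show (∑ j, ∑ ν, ∑ k,
            T (star (P.u ⟨μ, .inr j⟩ ⟨ν, .inl k⟩) * P.u ⟨μ, .inr j⟩ ⟨ν, .inl k⟩))
          = ∑ ν, ∑ k, ∑ j,
            T (star (P.u ⟨μ, .inr j⟩ ⟨ν, .inl k⟩) * P.u ⟨μ, .inr j⟩ ⟨ν, .inl k⟩) from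
        (swap3 _).symm,
        show (∑ j, ∑ ν, ∑ k, ((q μ ^ 2 * q ν ^ 2 : ℝ) : ℂ)
            * T (star (P.u ⟨μ, .inr j⟩ ⟨ν, .inl k⟩) * P.u ⟨μ, .inr j⟩ ⟨ν, .inl k⟩))
          = ∑ ν, ∑ k, ∑ j, ((q μ ^ 2 * q ν ^ 2 : ℝ) : ℂ)
            * T (star (P.u ⟨μ, .inr j⟩ ⟨ν, .inl k⟩) * P.u ⟨μ, .inr j⟩ ⟨ν, .inl k⟩) from
        (swap3 _).symm,
        ← Finset.sum_sub_distrib]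
      refine Finset.sum_congr rfl fun ν _ => ?_
      rw [map_sum, Finset.mul_sum, ← Finset.sum_sub_distrib]
      refine Finset.sum_congr rfl fun k _ => ?_
      rw [map_sum, Finset.mul_sum, ← Finset.sum_sub_distrib]
      refine Finset.sum_congr rfl fun j _ => ?_
      push_cast
      ring
    rw [goalform, ← hCC, sub_self]
  -- nonnegativity of the traced C-block sums
  have nonnegT : ∀ (τ : TracialState P.carrier) (μ ν : Fin r),
      0 ≤ τ.toFun (∑ k : Fin (M ν), ∑ j : Fin (M μ),
        star (P.u ⟨μ, .inr j⟩ ⟨ν, .inl k⟩) * P.u ⟨μ, .inr j⟩ ⟨ν, .inl k⟩) := by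
    intro τ μ ν
    rw [map_sum]
    refine Finset.sum_nonneg fun k _ => ?_
    rw [map_sum]
    exact Finset.sum_nonneg fun j _ => τ.nonneg' _
  have coeff_nonneg : ∀ μ ν : Fin r, (0 : ℂ) ≤ ((1 - q μ ^ 2 * q ν ^ 2 : ℝ) : ℂ) := by
    intro μ ν
    have h1 := hlast μ; have h2 := hlast ν
    have h3 := (hq0 μ).le; have h4 := (hq0 ν).le
    have h6 : q μ * q ν ≤ 1 := mul_le_one₀ h1 h4 h2
    have h7 : 0 ≤ q μ * q ν := mul_nonneg h3 h4
    have h5 : (0 : ℝ) ≤ 1 - q μ ^ 2 * q ν ^ 2 := by nlinarith [h6, h7]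
    exact_mod_cast h5
  -- each summand vanishes
  have allzero : ∀ (τ : TracialState P.carrier) (μ ν : Fin r),
      ((1 - q μ ^ 2 * q ν ^ 2 : ℝ) : ℂ) * τ.toFun (∑ k : Fin (M ν), ∑ j : Fin (M μ),
        star (P.u ⟨μ, .inr j⟩ ⟨ν, .inl k⟩) * P.u ⟨μ, .inr j⟩ ⟨ν, .inl k⟩) = 0 := by
    intro τ μ ν
    have h0 := main τ
    have h1 := (Finset.sum_eq_zero_iff_of_nonneg (fun μ' _ =>
      Finset.sum_nonneg fun ν' _ =>
        mul_nonneg (coeff_nonneg _ _) (nonnegT τ _ _))).mp h0 μ (Finset.mem_univ μ)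
    exact (Finset.sum_eq_zero_iff_of_nonneg (fun ν' _ =>
      mul_nonneg (coeff_nonneg _ _) (nonnegT τ _ _))).mp h1 ν (Finset.mem_univ ν)
  -- the coefficient is nonzero off the (r,r) block
  have key2 : ∀ (τ : TracialState P.carrier) (μ ν : Fin r),
      (μ, ν) ≠ ((⟨r - 1, by omega⟩ : Fin r), (⟨r - 1, by omega⟩ : Fin r)) →
      τ.toFun (∑ k : Fin (M ν), ∑ j : Fin (M μ),
        star (P.u ⟨μ, .inr j⟩ ⟨ν, .inl k⟩) * P.u ⟨μ, .inr j⟩ ⟨ν, .inl k⟩) = 0 := by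
    intro τ μ ν hne
    have hz := allzero τ μ ν
    have hlt : q μ * q ν < 1 := by
      by_cases hμ : μ = (⟨r - 1, by omega⟩ : Fin r)
      · have hν : ν ≠ (⟨r - 1, by omega⟩ : Fin r) := by
          rintro rfl; exact hne (by rw [hμ])
        have hνlt : q ν < 1 := by
          rw [← hqlast]
          refine hmono (Fin.lt_def.mpr ?_)
          have h6 := ν.isLt
          have h7 : (ν : ℕ) ≠ r - 1 := fun h => hν (Fin.ext h)
          simp; omega
        nlinarith [hq0 μ, hq0 ν, hlast μ]
      · have hμlt : q μ < 1 := by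
          rw [← hqlast]
          refine hmono (Fin.lt_def.mpr ?_)
          have h6 := μ.isLt
          have h7 : (μ : ℕ) ≠ r - 1 := fun h => hμ (Fin.ext h)
          simp; omega
        nlinarith [hq0 μ, hq0 ν, hlast ν]
    have hcoeff : (1 - q μ ^ 2 * q ν ^ 2 : ℝ) ≠ 0 := by
      have h7 : 0 ≤ q μ * q ν := mul_nonneg (hq0 μ).le (hq0 ν).le
      have h8 : (q μ * q ν) ^ 2 < 1 := by nlinarith
      nlinarith
    rcases mul_eq_zero.mp hz with h | h
    · exact absurd h (Complex.ofReal_ne_zero.mpr hcoeff)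
    · exact h
  refine ⟨fun τ => ⟨main τ, fun μ ν hne => key2 τ μ ν hne⟩, ?_⟩
  intro μ ν hne j k
  simp only [kacIdeal, Set.mem_setOf_eq]
  intro τ
  have h0 := key2 τ μ ν hne
  rw [map_sum] at h0
  have h1 := (Finset.sum_eq_zero_iff_of_nonneg (fun k' _ => by
    rw [map_sum]; exact Finset.sum_nonneg fun j' _ => τ.nonneg' _)).mp h0 k
    (Finset.mem_univ k)
  rw [map_sum] at h1
  exact (Finset.sum_eq_zero_iff_of_nonneg (fun j' _ => τ.nonneg' _)).mp h1 j
    (Finset.mem_univ j)
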